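/- arXiv:2009.10883 — 3 statements merged into one kernel-verified Lean document; each statement's English description precedes it below -/
import Mathlib

section
/- Let M be a labeled MDP, M' its augmented MDP, and Paths_fin,φ ⊆ Paths_fin(s_init) a set of finite paths of M. For every policy π' ∈ Π' of M' (i.e., one under which every path eventually takes a_term) there exists a policy π ∈ Π of M, obtained by replacing every choice of a_term by an arbitrary enabled action of M, such that Pr(M^π ⊨ Paths_fin,φ) ≥ Pr(M'^{π'} ⊨ Paths_fin,φ). Consequently max_{π ∈ Π} Pr(M^π ⊨ Paths_fin,φ) ≥ max_{π' ∈ Π'} Pr(M'^{π'} ⊨ Paths_fin,φ). -/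
open scoped ENNReal

namespace LTLfMDP

/-- A labeled Markov decision process (data part): transition probabilities,
enabled actions, initial state and labeling function. -/
structure MDP (S A AP : Type) where
  P : S → A → S → ℝ≥0∞
  enabled : S → Set A
  init : S
  label : S → Set AP

/-- A finite path from the initial state: the list of action/successor-state
steps taken (the implicit first state is `init`). -/
abbrev FinPath (S A : Type) := List (A × S)

/-- An infinite path from the initial state: at time `i` the action taken and
the successor state reached (the implicit first state is `init`). -/
abbrev InfPath (S A : Type) := ℕ → A × S

/-- A policy maps every finite path to an action. -/
abbrev Policy (S A : Type) := FinPath S A → A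

variable {S A AP : Type}

/-- Well-formedness of a labeled MDP: every state has an enabled action and
the transition probabilities of enabled actions sum to one. -/
def MDP.IsWF [Fintype S] (M : MDP S A AP) : Prop :=
  (∀ s : S, (M.enabled s).Nonempty) ∧
    ∀ (s : S) (a : A), a ∈ M.enabled s → (∑ s' : S, M.P s a s') = 1

/-- The last state of a finite path (`init` for the empty path). -/
def MDP.lastState (M : MDP S A AP) (l : FinPath S A) : S :=
  (l.map Prod.snd).getLastD M.init

/-- The `i`-th state `s_i` along a finite path (`s_0 = init`). -/
def MDP.stateAtF (M : MDP S A AP) (l : FinPath S A) (i : ℕ) : S :=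
  M.lastState (l.take i)

/-- A finite path of the MDP: every action is enabled and every transition has
positive probability. -/
def MDP.ValidFin (M : MDP S A AP) (l : FinPath S A) : Prop :=
  ∀ i (h : i < l.length),
    (l.get ⟨i, h⟩).1 ∈ M.enabled (M.stateAtF l i) ∧
      0 < M.P (M.stateAtF l i) (l.get ⟨i, h⟩).1 (l.get ⟨i, h⟩).2

/-- The `i`-th state `s_i` along an infinite path (`s_0 = init`). -/
def MDP.stateAtI (M : MDP S A AP) (w : InfPath S A) : ℕ → S
  | 0 => M.init
  | i + 1 => (w i).2

/-- An infinite path of the MDP: every action is enabled and every transition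
has positive probability. -/
def MDP.ValidInf (M : MDP S A AP) (w : InfPath S A) : Prop :=
  ∀ i : ℕ,
    (w i).1 ∈ M.enabled (M.stateAtI w i) ∧
      0 < M.P (M.stateAtI w i) (w i).1 (M.stateAtI w (i + 1))

/-- A policy of the MDP chooses an enabled action after every finite path. -/
def MDP.IsPolicy (M : MDP S A AP) (π : Policy S A) : Prop :=
  ∀ l : FinPath S A, π l ∈ M.enabled (M.lastState l)

/-- The finite prefix of length `n` of an infinite path. -/
def takeI (w : InfPath S A) (n : ℕ) : FinPath S A :=
  (List.range n).map w

/-- A finite path is `π`-consistent if each of its actions is the one `π`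
assigns to the corresponding proper prefix. -/
def ConsistentFin (π : Policy S A) (l : FinPath S A) : Prop :=
  ∀ i (h : i < l.length), (l.get ⟨i, h⟩).1 = π (l.take i)

/-- `Paths^π(s_init)`: the set of `π`-consistent infinite paths of the MDP. -/
def MDP.PathsSet (M : MDP S A AP) (π : Policy S A) : Set (InfPath S A) :=
  { w | M.ValidInf w ∧ ∀ i : ℕ, (w i).1 = π (takeI w i) }

/-- The cylinder set of a finite path: all `π`-consistent infinite paths of the
MDP extending it. -/
def MDP.Cyl (M : MDP S A AP) (π : Policy S A) (l : FinPath S A) :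
    Set (InfPath S A) :=
  { w | w ∈ M.PathsSet π ∧ takeI w l.length = l }

/-- The σ-algebra generated by the cylinder sets of (valid, `π`-consistent)
finite paths. -/
def MDP.cylSigma (M : MDP S A AP) (π : Policy S A) :
    MeasurableSpace (InfPath S A) :=
  MeasurableSpace.generateFrom
    { C | ∃ l : FinPath S A, M.ValidFin l ∧ ConsistentFin π l ∧ C = M.Cyl π l }

/-- The product of the transition probabilities along a finite path starting
in a given state. -/
noncomputable def MDP.weightFrom (M : MDP S A AP) : S → List (A × S) → ℝ≥0∞
  | _, [] => 1
  | s, (a, s') :: rest => M.P s a s' * M.weightFrom s' rest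

/-- `∏_{0 ≤ i < n} P(s_i, a_i, s_{i+1})` for a finite path from `init`. -/
noncomputable def MDP.pathWeight (M : MDP S A AP) (l : FinPath S A) : ℝ≥0∞ :=
  M.weightFrom M.init l

/-- `μ` is the probability measure `Pr^π` induced by the policy `π`: it assigns
to the cylinder set of every valid `π`-consistent finite path the product of
the transition probabilities along that path. -/
def IsCylMeasure (M : MDP S A AP) (π : Policy S A)
    (μ : @MeasureTheory.Measure (InfPath S A) (M.cylSigma π)) : Prop :=
  ∀ l : FinPath S A, M.ValidFin l → ConsistentFin π l →
    μ (M.Cyl π l) = M.pathWeight l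

/-- `{w ∈ Paths^π(s_init) : pre(w) ∩ Paths_fin,φ ≠ ∅}`: the `π`-consistent
infinite paths having some finite prefix in the given set of finite paths. -/
def MDP.SatFinSet (M : MDP S A AP) (π : Policy S A)
    (Pfin : Set (FinPath S A)) : Set (InfPath S A) :=
  { w | w ∈ M.PathsSet π ∧ ∃ l ∈ Pfin, takeI w l.length = l }

/-- The augmented MDP `M'`: state `none` is `s_term`, action `none` is
`a_term`, and atomic proposition `none` is `alive`. -/
noncomputable def MDP.augment (M : MDP S A AP) : MDP (Option S) (Option A) (Option AP) where
  P s a s' :=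
    match s, a, s' with
    | some s0, some a0, some s1 => M.P s0 a0 s1
    | _, none, none => 1
    | _, _, _ => 0
  enabled s :=
    match s with
    | some s0 => insert none (Option.some '' M.enabled s0)
    | none => {none}
  init := some M.init
  label s :=
    match s with
    | some s0 => insert none (Option.some '' M.label s0)
    | none => ∅

/-- A finite path of `M` viewed as a finite path of the augmented MDP `M'`. -/
def liftFin (l : FinPath S A) : FinPath (Option S) (Option A) :=
  l.map fun p => (some p.1, some p.2)

/-- Membership in `Π'`: under `π'` every `π'`-consistent path of the augmented
MDP eventually takes the action `a_term` (= `none`). -/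
def MDP.Terminating (M' : MDP (Option S) (Option A) (Option AP))
    (π' : Policy (Option S) (Option A)) : Prop :=
  ∀ w ∈ M'.PathsSet π', ∃ i : ℕ, (w i).1 = (none : Option A)

/-!
Replace every `a_term` chosen by `π'` after a path of `M` by an enabled action of `M`. The event
"some prefix lies in `Paths_fin,φ`" is, under `π'`, covered by the cylinders of the prefix-minimal
paths of `Paths_fin,φ` consistent with `π'`. These paths never take `a_term`, so they are also
consistent with the new policy `π`, where their cylinders have the same probability, are pairwise
disjoint and still lie inside the event. Subadditivity on the `M'` side and additivity on the `M`
side give the inequality.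
-/

open MeasureTheory

section PrefixMinimal

variable {α : Type*}

def prefixMinimal (G : Set (List α)) : Set (List α) :=
  {l | l ∈ G ∧ ∀ m ∈ G, m <+: l → m = l}

lemma exists_prefixMinimal_isPrefix {G : Set (List α)} {l : List α} (hl : l ∈ G) :
    ∃ m ∈ prefixMinimal G, m <+: l := by
  classical
  have hex : ∃ n, ∃ m ∈ G, m <+: l ∧ m.length = n := ⟨_, l, hl, List.prefix_refl l, rfl⟩
  obtain ⟨m, hmG, hml, hmlen⟩ := Nat.find_spec hex
  refine ⟨m, ⟨hmG, fun m' hm'G hm'm => hm'm.eq_of_length ?_⟩, hml⟩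
  refine le_antisymm hm'm.length_le (hmlen ▸ Nat.find_min' hex ?_)
  exact ⟨m', hm'G, hm'm.trans hml, rfl⟩

end PrefixMinimal

lemma liftFin_length (l : FinPath S A) : (liftFin l).length = l.length :=
  List.length_map _

lemma liftFin_take (l : FinPath S A) (k : ℕ) : (liftFin l).take k = liftFin (l.take k) :=
  List.map_take.symm

lemma MDP.augment_lastState_liftFin (M : MDP S A AP) (l : FinPath S A) :
    M.augment.lastState (liftFin l) = some (M.lastState l) := by
  have hsnd : (liftFin l).map Prod.snd = (l.map Prod.snd).map some := by simp [liftFin]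
  rw [MDP.lastState, hsnd]
  exact List.getLastD_map

lemma MDP.augment_stateAtF_liftFin (M : MDP S A AP) (l : FinPath S A) (i : ℕ) :
    M.augment.stateAtF (liftFin l) i = some (M.stateAtF l i) := by
  rw [MDP.stateAtF, liftFin_take, M.augment_lastState_liftFin, MDP.stateAtF]

lemma getElem_liftFin (l : FinPath S A) (i : ℕ) (hi : i < (liftFin l).length) :
    (liftFin l)[i] =
      (some (l[i]'(liftFin_length l ▸ hi)).1, some (l[i]'(liftFin_length l ▸ hi)).2) :=
  List.getElem_map _

lemma MDP.augment_pathWeight_liftFin (M : MDP S A AP) (l : FinPath S A) :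
    M.augment.pathWeight (liftFin l) = M.pathWeight l := by
  suffices ∀ s, M.augment.weightFrom (some s) (liftFin l) = M.weightFrom s l from this M.init
  induction l with
  | nil => exact fun _ => rfl
  | cons p l ih => exact fun s => congrArg (M.P s p.1 p.2 * ·) (ih p.2)

lemma MDP.ValidFin.augment_liftFin {M : MDP S A AP} {l : FinPath S A} (hl : M.ValidFin l) :
    M.augment.ValidFin (liftFin l) := by
  intro i hi
  have hi' : i < l.length := liftFin_length l ▸ hi
  obtain ⟨henabled, hpos⟩ := hl i hi'
  simp only [List.get_eq_getElem] at henabled hpos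
  simp only [List.get_eq_getElem, getElem_liftFin, M.augment_stateAtF_liftFin]
  exact ⟨Set.mem_insert_of_mem _ ⟨_, henabled, rfl⟩, hpos⟩

lemma ConsistentFin.of_liftFin {π : Policy S A} {π' : Policy (Option S) (Option A)}
    (hagree : ∀ l a, π' (liftFin l) = some a → π l = a) {l : FinPath S A}
    (hl : ConsistentFin π' (liftFin l)) : ConsistentFin π l := by
  intro i hi
  have hc := hl i (by rwa [liftFin_length])
  simp only [List.get_eq_getElem, getElem_liftFin, liftFin_take] at hc
  exact (hagree _ _ hc.symm).symm

lemma takeI_length (w : InfPath S A) (n : ℕ) : (takeI w n).length = n := by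
  simp [takeI]

lemma takeI_take (w : InfPath S A) {k n : ℕ} (hkn : k ≤ n) :
    (takeI w n).take k = takeI w k := by
  simp [takeI, ← List.map_take, List.take_range, Nat.min_eq_left hkn]

lemma isPrefix_of_takeI_eq {w : InfPath S A} {l₁ l₂ : FinPath S A}
    (h₁ : takeI w l₁.length = l₁) (h₂ : takeI w l₂.length = l₂) (hle : l₁.length ≤ l₂.length) :
    l₁ <+: l₂ := by
  rw [← h₁, ← h₂, ← takeI_take w hle]
  exact List.take_prefix _ _

lemma takeI_eq_of_isPrefix {w : InfPath S A} {l m : FinPath S A}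
    (hl : takeI w l.length = l) (hm : m <+: l) : takeI w m.length = m := by
  rw [← takeI_take w hm.length_le, hl]
  exact (List.prefix_iff_eq_take.mp hm).symm

lemma MDP.consistentFin_takeI {M : MDP S A AP} {π : Policy S A} {w : InfPath S A}
    (hw : w ∈ M.PathsSet π) (n : ℕ) : ConsistentFin π (takeI w n) := by
  intro i hi
  have hin : i ≤ n := (hi.trans_eq (takeI_length w n)).le
  rw [List.get_eq_getElem, takeI_take w hin]
  simpa [takeI] using hw.2 i

section Cylinders

variable (M : MDP S A AP) (π : Policy S A)

lemma MDP.cyl_subset_satFinSet {Q : Set (FinPath S A)} {l : FinPath S A} (hl : l ∈ Q) :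
    M.Cyl π l ⊆ M.SatFinSet π Q :=
  fun _ hw => ⟨hw.1, l, hl, hw.2⟩

lemma MDP.pairwiseDisjoint_cyl_prefixMinimal (G : Set (FinPath S A)) :
    (prefixMinimal G).PairwiseDisjoint (M.Cyl π) := by
  intro l₁ hl₁ l₂ hl₂ hne
  refine Set.disjoint_left.mpr fun w hw₁ hw₂ => hne ?_
  rcases le_total l₁.length l₂.length with hle | hle
  · exact hl₂.2 l₁ hl₁.1 (isPrefix_of_takeI_eq hw₁.2 hw₂.2 hle)
  · exact (hl₁.2 l₂ hl₂.1 (isPrefix_of_takeI_eq hw₂.2 hw₁.2 hle)).symm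

end Cylinders

lemma IsCylMeasure.measure_biUnion_prefixMinimal [Countable S] [Countable A]
    {M : MDP S A AP} {π : Policy S A} {μ : @Measure (InfPath S A) (M.cylSigma π)}
    (hμ : IsCylMeasure M π μ) {G : Set (FinPath S A)}
    (hG : ∀ l ∈ G, M.ValidFin l ∧ ConsistentFin π l) :
    μ (⋃ l ∈ prefixMinimal G, M.Cyl π l) = ∑' l : prefixMinimal G, M.pathWeight l := by
  have hmeas : ∀ l ∈ prefixMinimal G, @MeasurableSet _ (M.cylSigma π) (M.Cyl π l) :=
    fun l hl => MeasurableSpace.measurableSet_generateFrom ⟨l, (hG l hl.1).1, (hG l hl.1).2, rfl⟩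
  rw [measure_biUnion (Set.to_countable _)
    (M.pairwiseDisjoint_cyl_prefixMinimal π G) hmeas]
  exact tsum_congr fun l => hμ l (hG l l.2.1).1 (hG l l.2.1).2

lemma MDP.augment_satFinSet_subset (M : MDP S A AP) (π' : Policy (Option S) (Option A))
    (Pfin : Set (FinPath S A)) :
    M.augment.SatFinSet π' (liftFin '' Pfin) ⊆
      ⋃ l ∈ prefixMinimal {l | l ∈ Pfin ∧ ConsistentFin π' (liftFin l)},
        M.augment.Cyl π' (liftFin l) := by
  rintro w ⟨hw, _, ⟨l, hl, rfl⟩, htake⟩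
  have hlG : l ∈ {l | l ∈ Pfin ∧ ConsistentFin π' (liftFin l)} :=
    ⟨hl, htake ▸ M.augment.consistentFin_takeI hw _⟩
  obtain ⟨m, hm, hml⟩ := exists_prefixMinimal_isPrefix hlG
  exact Set.mem_biUnion hm ⟨hw, takeI_eq_of_isPrefix htake (hml.map _)⟩

theorem MDP.measure_augment_satFinSet_le [Countable S] [Countable A] (M : MDP S A AP)
    {Pfin : Set (FinPath S A)} (hPfin : ∀ l ∈ Pfin, M.ValidFin l)
    {π : Policy S A} {π' : Policy (Option S) (Option A)}
    (hagree : ∀ l a, π' (liftFin l) = some a → π l = a)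
    {μ : @Measure (InfPath S A) (M.cylSigma π)} (hμ : IsCylMeasure M π μ)
    {μ' : @Measure (InfPath (Option S) (Option A)) (M.augment.cylSigma π')}
    (hμ' : IsCylMeasure M.augment π' μ') :
    μ' (M.augment.SatFinSet π' (liftFin '' Pfin)) ≤ μ (M.SatFinSet π Pfin) := by
  set G := {l | l ∈ Pfin ∧ ConsistentFin π' (liftFin l)}
  have hG : ∀ l ∈ G, M.ValidFin l ∧ ConsistentFin π l :=
    fun l hl => ⟨hPfin l hl.1, hl.2.of_liftFin hagree⟩
  calc μ' (M.augment.SatFinSet π' (liftFin '' Pfin))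
      ≤ μ' (⋃ l ∈ prefixMinimal G, M.augment.Cyl π' (liftFin l)) :=
        measure_mono (M.augment_satFinSet_subset π' Pfin)
    _ ≤ ∑' l : prefixMinimal G, μ' (M.augment.Cyl π' (liftFin l)) :=
        measure_biUnion_le _ (Set.to_countable _) _
    _ = ∑' l : prefixMinimal G, M.pathWeight l := tsum_congr fun l => by
        rw [hμ' _ (hPfin l l.2.1.1).augment_liftFin l.2.1.2, M.augment_pathWeight_liftFin]
    _ = μ (⋃ l ∈ prefixMinimal G, M.Cyl π l) := (hμ.measure_biUnion_prefixMinimal hG).symm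
    _ ≤ μ (M.SatFinSet π Pfin) :=
        measure_mono (Set.iUnion₂_subset fun l hl => M.cyl_subset_satFinSet π hl.1.1)

def dropTerm (π' : Policy (Option S) (Option A)) (σ : Policy S A) : Policy S A :=
  fun l => (π' (liftFin l)).getD (σ l)

lemma dropTerm_of_eq_some {π' : Policy (Option S) (Option A)} {σ : Policy S A}
    {l : FinPath S A} {a : A} (h : π' (liftFin l) = some a) : dropTerm π' σ l = a := by
  simp [dropTerm, h]

lemma MDP.exists_isPolicy (M : MDP S A AP) (h : ∀ s, (M.enabled s).Nonempty) :
    ∃ σ : Policy S A, M.IsPolicy σ :=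
  ⟨fun _ => (h _).some, fun _ => (h _).some_mem⟩

lemma MDP.isPolicy_dropTerm {M : MDP S A AP} {π' : Policy (Option S) (Option A)}
    {σ : Policy S A} (hπ' : M.augment.IsPolicy π') (hσ : M.IsPolicy σ) :
    M.IsPolicy (dropTerm π' σ) := by
  intro l
  have hmem := hπ' (liftFin l)
  rw [M.augment_lastState_liftFin] at hmem
  rcases hl : π' (liftFin l) with _ | a
  · simpa [dropTerm, hl] using hσ l
  · rw [hl] at hmem
    obtain ⟨b, hb, hba⟩ := (Set.mem_insert_iff.mp hmem).resolve_left (by simp)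
    rwa [dropTerm_of_eq_some hl, ← Option.some_injective _ hba]

theorem augment_policy_ge_general
    {S A AP : Type} [Fintype S] [Fintype A]
    (M : MDP S A AP) (hM : M.IsWF)
    (Pfin : Set (FinPath S A)) (hPfin : ∀ l ∈ Pfin, M.ValidFin l)
    (μf : ∀ π : Policy S A,
      @MeasureTheory.Measure (InfPath S A) (M.cylSigma π))
    (hμf : ∀ π : Policy S A, M.IsPolicy π → IsCylMeasure M π (μf π))
    (μf' : ∀ π' : Policy (Option S) (Option A),
      @MeasureTheory.Measure (InfPath (Option S) (Option A))
        ((M.augment).cylSigma π'))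
    (hμf' : ∀ π' : Policy (Option S) (Option A),
      (M.augment).IsPolicy π' → IsCylMeasure (M.augment) π' (μf' π')) :
    (∀ π' : Policy (Option S) (Option A),
        (M.augment).IsPolicy π' → (M.augment).Terminating π' →
          ∃ π : Policy S A, M.IsPolicy π ∧
            (∀ (l : FinPath S A) (a : A), π' (liftFin l) = some a → π l = a) ∧
            μf π (M.SatFinSet π Pfin) ≥
              μf' π' ((M.augment).SatFinSet π' (liftFin '' Pfin))) ∧
      (⨆ (π : Policy S A) (_ : M.IsPolicy π), μf π (M.SatFinSet π Pfin)) ≥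
        ⨆ (π' : Policy (Option S) (Option A))
          (_ : (M.augment).IsPolicy π' ∧ (M.augment).Terminating π'),
          μf' π' ((M.augment).SatFinSet π' (liftFin '' Pfin)) := by
  obtain ⟨σ, hσ⟩ := M.exists_isPolicy hM.1
  have key : ∀ π', M.augment.IsPolicy π' →
      M.IsPolicy (dropTerm π' σ) ∧
        (∀ (l : FinPath S A) (a : A), π' (liftFin l) = some a → dropTerm π' σ l = a) ∧
        μf (dropTerm π' σ) (M.SatFinSet (dropTerm π' σ) Pfin) ≥
          μf' π' (M.augment.SatFinSet π' (liftFin '' Pfin)) := fun π' hπ' =>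
    have hpol := MDP.isPolicy_dropTerm hπ' hσ
    ⟨hpol, fun _ _ => dropTerm_of_eq_some,
      M.measure_augment_satFinSet_le hPfin (fun _ _ => dropTerm_of_eq_some)
        (hμf _ hpol) (hμf' π' hπ')⟩
  refine ⟨fun π' hπ' _ => ⟨_, key π' hπ'⟩, iSup₂_le fun π' hπ' => ?_⟩
  obtain ⟨hpol, -, hge⟩ := key π' hπ'.1
  exact hge.trans (le_iSup₂_of_le _ hpol le_rfl)

/-- for every policy `π' ∈ Π'` of the augmented MDP `M'` there is
a policy `π` of `M`, obtained by replacing every choice of `a_term` by an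
arbitrary enabled action of `M`, with at least the same probability of having a
prefix in `Paths_fin,φ`; consequently
`max_{π ∈ Π} Pr(M^π ⊨ Paths_fin,φ) ≥ max_{π' ∈ Π'} Pr(M'^{π'} ⊨ Paths_fin,φ)`. -/
theorem augment_policy_ge
    {S A AP : Type} [Fintype S] [Fintype A] [Fintype AP]
    (M : MDP S A AP) (hM : M.IsWF)
    (Pfin : Set (FinPath S A)) (hPfin : ∀ l ∈ Pfin, M.ValidFin l)
    (μf : ∀ π : Policy S A,
      @MeasureTheory.Measure (InfPath S A) (M.cylSigma π))
    (hμf : ∀ π : Policy S A, M.IsPolicy π → IsCylMeasure M π (μf π))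
    (μf' : ∀ π' : Policy (Option S) (Option A),
      @MeasureTheory.Measure (InfPath (Option S) (Option A))
        ((M.augment).cylSigma π'))
    (hμf' : ∀ π' : Policy (Option S) (Option A),
      (M.augment).IsPolicy π' → IsCylMeasure (M.augment) π' (μf' π')) :
    (∀ π' : Policy (Option S) (Option A),
        (M.augment).IsPolicy π' → (M.augment).Terminating π' →
          ∃ π : Policy S A, M.IsPolicy π ∧
            (∀ (l : FinPath S A) (a : A), π' (liftFin l) = some a → π l = a) ∧
            μf π (M.SatFinSet π Pfin) ≥
              μf' π' ((M.augment).SatFinSet π' (liftFin '' Pfin))) ∧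
      (⨆ (π : Policy S A) (_ : M.IsPolicy π), μf π (M.SatFinSet π Pfin)) ≥
        ⨆ (π' : Policy (Option S) (Option A))
          (_ : (M.augment).IsPolicy π' ∧ (M.augment).Terminating π'),
          μf' π' ((M.augment).SatFinSet π' (liftFin '' Pfin)) :=
  augment_policy_ge_general M hM Pfin hPfin μf hμf μf' hμf'

end LTLfMDP
end

section
/- Let φ be an LTLf formula over atomic propositions AP, and let ρ = ρ_0…ρ_{n-1} ∈ (2^{AP})^* be a nonempty finite trace. Then ρ ⊨ φ under LTLf semantics if and only if the lift of ρ (the infinite trace whose i-th letter is ρ_i ∪ {alive} for i < n and ∅ for i ≥ n) satisfies the LTL formula g(φ) = t(φ) ∧ (alive U (G ¬alive)) under LTL semantics. -/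
open scoped ENNReal

namespace LTLfMDP

/-- Syntax of LTL / LTLf formulas over atomic propositions `α`. -/
inductive LTL (α : Type) : Type
  | tru : LTL α
  | atom : α → LTL α
  | neg : LTL α → LTL α
  | conj : LTL α → LTL α → LTL α
  | next : LTL α → LTL α
  | untl : LTL α → LTL α → LTL α

variable {α : Type}

/-- Infinite-trace (LTL) satisfaction `σ, i ⊨ φ`. -/
def LTL.SatI (σ : ℕ → Set α) : ℕ → LTL α → Prop
  | _, .tru => True
  | i, .atom p => p ∈ σ i
  | i, .neg φ => ¬ LTL.SatI σ i φ
  | i, .conj φ ψ => LTL.SatI σ i φ ∧ LTL.SatI σ i ψ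
  | i, .next φ => LTL.SatI σ (i + 1) φ
  | i, .untl φ ψ =>
      ∃ j : ℕ, i ≤ j ∧ LTL.SatI σ j ψ ∧ ∀ k : ℕ, i ≤ k → k < j → LTL.SatI σ k φ

/-- Infinite-trace (LTL) satisfaction `σ ⊨ φ`. -/
def LTL.Sat (σ : ℕ → Set α) (φ : LTL α) : Prop := LTL.SatI σ 0 φ

/-- `G φ` abbreviates `¬(⊤ U ¬φ)`. -/
def LTL.G (φ : LTL α) : LTL α := .neg (.untl .tru (.neg φ))

/-- Finite-trace (LTLf) satisfaction `ρ, i ⊨ φ` (positions outside the trace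
carry the empty letter, which is never consulted from a position inside a
nonempty trace). -/
def LTL.SatFI (ρ : List (Set α)) : ℕ → LTL α → Prop
  | _, .tru => True
  | i, .atom p => p ∈ ρ.getD i ∅
  | i, .neg φ => ¬ LTL.SatFI ρ i φ
  | i, .conj φ ψ => LTL.SatFI ρ i φ ∧ LTL.SatFI ρ i ψ
  | i, .next φ => i + 1 < ρ.length ∧ LTL.SatFI ρ (i + 1) φ
  | i, .untl φ ψ =>
      ∃ j : ℕ, i ≤ j ∧ j < ρ.length ∧ LTL.SatFI ρ j ψ ∧
        ∀ k : ℕ, i ≤ k → k < j → LTL.SatFI ρ k φ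

/-- Finite-trace (LTLf) satisfaction `ρ ⊨ φ`. -/
def LTL.SatF (ρ : List (Set α)) (φ : LTL α) : Prop := LTL.SatFI ρ 0 φ

/-- The translation `t` from LTLf formulas over `α` to LTL formulas over
`Option α`, where the fresh proposition `alive` is `none`. -/
def LTL.trans : LTL α → LTL (Option α)
  | .tru => .tru
  | .atom p => .conj (.atom (some p)) (.atom none)
  | .neg φ => .neg φ.trans
  | .conj φ ψ => .conj φ.trans ψ.trans
  | .next φ => .next (.conj (.atom none) φ.trans)
  | .untl φ ψ => .untl φ.trans (.conj (.atom none) ψ.trans)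

/-- `g(φ) = t(φ) ∧ (alive U (G ¬alive))`. -/
def LTL.gtrans (φ : LTL α) : LTL (Option α) :=
  .conj φ.trans (.untl (.atom none) (LTL.G (.neg (.atom none))))

/-- The lift of a finite trace over `2^AP` to an infinite trace over
`2^(AP ∪ {alive})`: the `i`-th letter is `ρ_i ∪ {alive}` for `i < |ρ|`
and `∅` afterwards. -/
def liftTrace (ρ : List (Set α)) : ℕ → Set (Option α) := fun i =>
  if i < ρ.length then insert none (Option.some '' ρ.getD i ∅) else ∅

/-! Position by position, `t` commutes with the lift: `alive` holds exactly at the positions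
of `ρ`, so the `alive` guards in `t(X φ)` and `t(φ U ψ)` reproduce the LTLf bound `< |ρ|`;
past the end of `ρ` both sides are false on atoms, `X` and `U` alike. The extra conjunct
`alive U G ¬alive` holds on every lift, witnessed by the position `|ρ|`. -/

@[simp]
lemma none_mem_liftTrace (ρ : List (Set α)) (i : ℕ) :
    none ∈ liftTrace ρ i ↔ i < ρ.length := by
  unfold liftTrace
  split <;> simp_all

@[simp]
lemma some_mem_liftTrace (ρ : List (Set α)) (i : ℕ) (p : α) :
    some p ∈ liftTrace ρ i ↔ p ∈ ρ.getD i ∅ := by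
  unfold liftTrace
  split
  · simp
  · simp [List.getElem?_eq_none (not_lt.mp ‹_›)]

lemma satFI_iff_satI_liftTrace_trans (ρ : List (Set α)) (φ : LTL α) (i : ℕ) :
    LTL.SatFI ρ i φ ↔ LTL.SatI (liftTrace ρ) i φ.trans := by
  induction φ generalizing i with
  | tru => simp [LTL.SatFI, LTL.SatI, LTL.trans]
  | atom p =>
    simp only [LTL.SatFI, LTL.SatI, LTL.trans, some_mem_liftTrace, none_mem_liftTrace,
      iff_self_and]
    intro hp
    by_contra hi
    rw [List.getD_eq_default _ _ (not_lt.mp hi)] at hp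
    exact hp
  | neg φ ih => simp [LTL.SatFI, LTL.SatI, LTL.trans, ih]
  | conj φ ψ ihφ ihψ => simp [LTL.SatFI, LTL.SatI, LTL.trans, ihφ, ihψ]
  | next φ ih => simp [LTL.SatFI, LTL.SatI, LTL.trans, ih]
  | untl φ ψ ihφ ihψ => simp [LTL.SatFI, LTL.SatI, LTL.trans, ihφ, ihψ, and_assoc]

lemma satI_liftTrace_G_not_alive (ρ : List (Set α)) (i : ℕ) :
    LTL.SatI (liftTrace ρ) i (LTL.G (.neg (.atom none))) ↔ ρ.length ≤ i := by
  simp only [LTL.G, LTL.SatI, none_mem_liftTrace, not_not, not_exists]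
  refine ⟨fun h => not_lt.mp fun hi => h i ⟨le_rfl, hi, by simp⟩, fun hi j hj => ?_⟩
  omega

lemma satI_liftTrace_alive_until_G_not_alive (ρ : List (Set α)) (i : ℕ) :
    LTL.SatI (liftTrace ρ) i (.untl (.atom none) (LTL.G (.neg (.atom none)))) := by
  refine ⟨max i ρ.length, le_max_left _ _, ?_, fun k _ hk => ?_⟩
  · exact (satI_liftTrace_G_not_alive ρ _).mpr (le_max_right _ _)
  · exact (none_mem_liftTrace ρ k).mpr (by omega)

theorem ltlf_sat_iff_lift_sat_gtrans_general
    (AP : Type) (φ : LTL AP) (ρ : List (Set AP)) :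
    LTL.SatF ρ φ ↔ LTL.Sat (liftTrace ρ) (LTL.gtrans φ) :=
  (satFI_iff_satI_liftTrace_trans ρ φ 0).trans
    (and_iff_left (satI_liftTrace_alive_until_G_not_alive ρ 0)).symm

/-- a nonempty finite trace `ρ` satisfies the LTLf formula `φ`
iff the lift of `ρ` (letters `ρ_i ∪ {alive}` for `i < |ρ|` and `∅` afterwards)
satisfies the LTL formula `g(φ) = t(φ) ∧ (alive U (G ¬alive))`. -/
theorem ltlf_sat_iff_lift_sat_gtrans
    (AP : Type) (φ : LTL AP) (ρ : List (Set AP)) (hρ : ρ ≠ []) :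
    LTL.SatF ρ φ ↔ LTL.Sat (liftTrace ρ) (LTL.gtrans φ) :=
  ltlf_sat_iff_lift_sat_gtrans_general AP φ ρ

end LTLfMDP
end

section
/- Let M be a labeled MDP, M' its augmented MDP, and φ an LTLf formula over AP. An infinite path w' = s_0⟨a_0,s_1⟩⟨a_1,s_2⟩… of M' has labeling L'(s_0)L'(s_1)… satisfying the LTL formula g(φ) if and only if there exists n ≥ 1 such that s_i ≠ s_term for all i < n, s_i = s_term for all i ≥ n, and the finite trace L(s_0)…L(s_{n-1}) satisfies φ under LTLf semantics (equivalently, the finite path s_0…s_{n-1} of M has labeling in L(φ)). -/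
open scoped ENNReal

namespace LTLfMDP

variable {S A AP : Type}

variable {α : Type}

/-!
The second conjunct `alive U G ¬alive` of `g(φ)` holds exactly when `alive` marks an initial
segment `[0, n)` of the trace. On such a trace `t(φ)` is evaluated at positions `< n` exactly as
`φ` on the finite trace of the first `n` letters, because `t` guards every atom, every `X`-step
and every `U`-witness by `alive`. Along states of `M'`, `alive` holds exactly at those other
than `s_term`, and `s_0 = s_init` forces `n ≥ 1`.
-/

def prefixTrace (σ : ℕ → Set (Option α)) (n : ℕ) : List (Set α) :=
  (List.range n).map fun k => Option.some ⁻¹' σ k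

section Translation

variable (σ : ℕ → Set (Option α)) (n : ℕ)

lemma length_prefixTrace : (prefixTrace σ n).length = n := by
  simp [prefixTrace]

lemma getD_prefixTrace (i : ℕ) :
    (prefixTrace σ n).getD i ∅ = if i < n then Option.some ⁻¹' σ i else ∅ := by
  split_ifs with hi <;> simp [prefixTrace, hi]

variable {σ n}

theorem satI_trans_iff (halive : ∀ k, none ∈ σ k ↔ k < n) (φ : LTL α) (i : ℕ) :
    LTL.SatI σ i φ.trans ↔ LTL.SatFI (prefixTrace σ n) i φ := by
  induction φ generalizing i with
  | tru => exact Iff.rfl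
  | atom p =>
    simp only [LTL.trans, LTL.SatI, LTL.SatFI, getD_prefixTrace, halive]
    split_ifs with hi <;> simp [hi]
  | neg φ ih => exact not_congr (ih i)
  | conj φ ψ ihφ ihψ => exact and_congr (ihφ i) (ihψ i)
  | next φ ih =>
    simp only [LTL.trans, LTL.SatI, LTL.SatFI, halive, ih, length_prefixTrace]
  | untl φ ψ ihφ ihψ =>
    simp only [LTL.trans, LTL.SatI, LTL.SatFI, halive, ihφ, ihψ, length_prefixTrace]
    exact exists_congr fun j => by tauto

end Translation

theorem sat_untl_alive_G_not_alive_iff (σ : ℕ → Set (Option α)) :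
    LTL.Sat σ (.untl (.atom none) (LTL.G (.neg (.atom none)))) ↔
      ∃ n : ℕ, ∀ k, none ∈ σ k ↔ k < n := by
  simp only [LTL.Sat, LTL.G, LTL.SatI, true_and, zero_le, true_implies, implies_true,
    not_exists, not_and, not_not, not_true_eq_false, imp_false]
  constructor
  · rintro ⟨n, hdead, halive⟩
    exact ⟨n, fun k => ⟨fun hk => not_le.mp fun hnk => hdead k hnk hk, halive k⟩⟩
  · rintro ⟨n, halive⟩
    exact ⟨n, fun k hnk hk => absurd ((halive k).mp hk) (not_lt.mpr hnk),
      fun k => (halive k).mpr⟩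

theorem sat_gtrans_iff (σ : ℕ → Set (Option α)) (φ : LTL α) :
    LTL.Sat σ φ.gtrans ↔
      ∃ n : ℕ, (∀ k, none ∈ σ k ↔ k < n) ∧ LTL.SatF (prefixTrace σ n) φ := by
  change LTL.SatI σ 0 φ.trans ∧ LTL.Sat σ _ ↔ _
  rw [sat_untl_alive_G_not_alive_iff]
  constructor
  · rintro ⟨hφ, n, halive⟩
    exact ⟨n, halive, (satI_trans_iff halive φ 0).mp hφ⟩
  · rintro ⟨n, halive, hφ⟩
    exact ⟨(satI_trans_iff halive φ 0).mpr hφ, n, halive⟩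

lemma forall_ne_none_iff_lt_iff {β : Type} (f : ℕ → Option β) (n : ℕ) :
    (∀ k, f k ≠ none ↔ k < n) ↔ (∀ i < n, f i ≠ none) ∧ ∀ i, n ≤ i → f i = none := by
  refine ⟨fun h => ⟨fun i hi => (h i).mpr hi, fun i hi => ?_⟩, fun ⟨hlt, hge⟩ k => ?_⟩
  · by_contra hne
    exact absurd ((h i).mp hne) (not_lt.mpr hi)
  · by_cases hk : k < n
    · simp [hk, hlt k hk]
    · simp [hk, hge k (not_lt.mp hk)]

section Augment

variable (M : MDP S A AP)

lemma none_mem_augment_label_iff (s : Option S) :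
    none ∈ M.augment.label s ↔ s ≠ none := by
  cases s <;> simp [MDP.augment]

lemma preimage_some_augment_label (s : S) :
    Option.some ⁻¹' M.augment.label (some s) = M.label s := by
  ext p
  simp [MDP.augment]

lemma prefixTrace_augment_label (s : ℕ → Option S) {n : ℕ} (halive : ∀ i < n, s i ≠ none) :
    prefixTrace (fun i => M.augment.label (s i)) n =
      (List.range n).map fun i => M.label ((s i).getD M.init) := by
  refine List.map_congr_left fun i hi => ?_
  obtain ⟨t, ht⟩ := Option.ne_none_iff_exists'.mp (halive i (List.mem_range.mp hi))
  simp only [ht, preimage_some_augment_label, Option.getD_some]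

end Augment

theorem augment_path_label_sat_gtrans_iff_general
    {S A AP : Type}
    (M : MDP S A AP)
    (φ : LTL AP) (w : InfPath (Option S) (Option A)) :
    LTL.Sat (fun i => (M.augment).label ((M.augment).stateAtI w i))
        (LTL.gtrans φ) ↔
      ∃ n : ℕ, 1 ≤ n ∧
        (∀ i < n, (M.augment).stateAtI w i ≠ none) ∧
        (∀ i : ℕ, n ≤ i → (M.augment).stateAtI w i = none) ∧
        LTL.SatF ((List.range n).map fun i =>
          M.label (((M.augment).stateAtI w i).getD M.init)) φ := by
  set s := M.augment.stateAtI w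
  have hs₀ : s 0 ≠ none := Option.some_ne_none M.init
  simp only [sat_gtrans_iff, none_mem_augment_label_iff, forall_ne_none_iff_lt_iff]
  constructor
  · rintro ⟨n, ⟨hlt, hge⟩, hφ⟩
    have hn : 1 ≤ n := Nat.one_le_iff_ne_zero.mpr fun h => hs₀ (hge 0 h.le)
    exact ⟨n, hn, hlt, hge, prefixTrace_augment_label M s hlt ▸ hφ⟩
  · rintro ⟨n, -, hlt, hge, hφ⟩
    exact ⟨n, ⟨hlt, hge⟩, (prefixTrace_augment_label M s hlt).symm ▸ hφ⟩

/-- an infinite path `w` of the augmented MDP `M'` has labeling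
`L'(s_0)L'(s_1)…` satisfying `g(φ)` iff there is `n ≥ 1` such that
`s_i ≠ s_term` for `i < n`, `s_i = s_term` for `i ≥ n`, and the finite trace
`L(s_0)…L(s_{n-1})` satisfies `φ` under LTLf semantics. -/
theorem augment_path_label_sat_gtrans_iff
    {S A AP : Type} [Fintype S] [Fintype A] [Fintype AP]
    (M : MDP S A AP) (hM : M.IsWF)
    (φ : LTL AP) (w : InfPath (Option S) (Option A))
    (hw : (M.augment).ValidInf w) :
    LTL.Sat (fun i => (M.augment).label ((M.augment).stateAtI w i))
        (LTL.gtrans φ) ↔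
      ∃ n : ℕ, 1 ≤ n ∧
        (∀ i < n, (M.augment).stateAtI w i ≠ none) ∧
        (∀ i : ℕ, n ≤ i → (M.augment).stateAtI w i = none) ∧
        LTL.SatF ((List.range n).map fun i =>
          M.label (((M.augment).stateAtI w i).getD M.init)) φ :=
  augment_path_label_sat_gtrans_iff_general M φ w

end LTLfMDP
end
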